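/- arXiv:1310.5757 — 4 statements merged into one kernel-verified Lean document; each statement's English description precedes it below -/
import Mathlib

section
/- Let L1, L2 > 0 and Ω = (0,L1)×(0,L2). Let α1, α2, β1, β2 be real constants with α1 ≥ 0, α2 ≥ 0 and α2·β1 − α1·β2 > 0, and set T1 = [[α1, β1], [β1, −α1]] and T2 = [[α2, β2], [β2, −α2]]. Let u = (u1, u2) be a pair of functions continuously differentiable on the closed rectangle [0,L1]×[0,L2] such that u1 = 0 on Γ_W ∪ Γ_S (i.e. u1(0,y) = 0 and u1(x,0) = 0 for all x, y) and u2 = 0 on Γ_E ∪ Γ_N (i.e. u2(L1,y) = 0 and u2(x,L2) = 0 for all x, y). Then ∫_Ω u(x,y)ᵗ·(T1·∂x u(x,y) + T2·∂y u(x,y)) dx dy ≥ 0. -/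
/-!
Since `T1` and `T2` are symmetric, `uᵗ T1 ∂x u = ½ ∂x (uᵗ T1 u)` and `uᵗ T2 ∂y u = ½ ∂y (uᵗ T2 u)`,
so by the divergence theorem the integral is half the outward flux of `(uᵗ T1 u, uᵗ T2 u)`
through `∂Ω`. The boundary conditions kill one component of `u` on each side: the flux density
is `α1 u1²` on `Γ_E`, `α1 u2²` on `Γ_W`, `α2 u1²` on `Γ_N` and `α2 u2²` on `Γ_S`, all nonnegative.
-/

open Set MeasureTheory

/-- The closed rectangle `[0,L1] × [0,L2]`. -/
def Rect (L1 L2 : ℝ) : Set (ℝ × ℝ) := Icc 0 L1 ×ˢ Icc 0 L2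

/-- The open rectangle `Ω = (0,L1) × (0,L2)`. -/
def Om (L1 L2 : ℝ) : Set (ℝ × ℝ) := Ioo 0 L1 ×ˢ Ioo 0 L2

/-- The partial derivative `∂x f` on the closed rectangle. -/
noncomputable def pdx (L1 L2 : ℝ) (f : ℝ × ℝ → ℝ) (p : ℝ × ℝ) : ℝ :=
  fderivWithin ℝ f (Rect L1 L2) p (1, 0)

/-- The partial derivative `∂y f` on the closed rectangle. -/
noncomputable def pdy (L1 L2 : ℝ) (f : ℝ × ℝ → ℝ) (p : ℝ × ℝ) : ℝ :=
  fderivWithin ℝ f (Rect L1 L2) p (0, 1)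

/-- `(v, w) ⬝ T (v, w)` for the traceless symmetric matrix `T = [[a, b], [b, -a]]`. -/
def tracelessQuadForm (a b v w : ℝ) : ℝ := a * (v ^ 2 - w ^ 2) + 2 * b * v * w

theorem tracelessQuadForm_zero_left_le_zero_right {a : ℝ} (ha : 0 ≤ a) (b v w : ℝ) :
    tracelessQuadForm a b 0 w ≤ tracelessQuadForm a b v 0 := by
  unfold tracelessQuadForm
  nlinarith [mul_nonneg ha (sq_nonneg v), mul_nonneg ha (sq_nonneg w)]

section Derivative

variable {E : Type*} [NormedAddCommGroup E] [NormedSpace ℝ E] (a b : ℝ) {u1 u2 : E → ℝ}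
  {s : Set E} {p : E}

theorem HasFDerivWithinAt.tracelessQuadForm {u1' u2' : E →L[ℝ] ℝ}
    (h1 : HasFDerivWithinAt u1 u1' s p) (h2 : HasFDerivWithinAt u2 u2' s p) :
    HasFDerivWithinAt (fun q => tracelessQuadForm a b (u1 q) (u2 q))
      ((2 : ℝ) • (u1 p • (a • u1' + b • u2') + u2 p • (b • u1' - a • u2'))) s p := by
  refine ((((h1.pow 2).sub (h2.pow 2)).const_mul a).add
    ((h1.const_mul (2 * b)).mul h2)).congr_fderiv ?_
  ext v
  simp only [add_apply, sub_apply, smul_apply, smul_eq_mul, nsmul_eq_mul]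
  ring

theorem fderivWithin_tracelessQuadForm_apply (hs : UniqueDiffWithinAt ℝ s p)
    (h1 : DifferentiableWithinAt ℝ u1 s p) (h2 : DifferentiableWithinAt ℝ u2 s p) (v : E) :
    fderivWithin ℝ (fun q => tracelessQuadForm a b (u1 q) (u2 q)) s p v =
      2 * (u1 p * (a * fderivWithin ℝ u1 s p v + b * fderivWithin ℝ u2 s p v)
        + u2 p * (b * fderivWithin ℝ u1 s p v - a * fderivWithin ℝ u2 s p v)) := by
  rw [(h1.hasFDerivWithinAt.tracelessQuadForm a b h2.hasFDerivWithinAt).fderivWithin hs]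
  simp only [add_apply, sub_apply, smul_apply, smul_eq_mul]

end Derivative

section Rectangle

variable {L1 L2 : ℝ}

theorem uniqueDiffOn_rect (hL1 : 0 < L1) (hL2 : 0 < L2) : UniqueDiffOn ℝ (Rect L1 L2) :=
  (uniqueDiffOn_Icc hL1).prod (uniqueDiffOn_Icc hL2)

theorem isOpen_om : IsOpen (Om L1 L2) :=
  isOpen_Ioo.prod isOpen_Ioo

theorem om_subset_rect : Om L1 L2 ⊆ Rect L1 L2 :=
  prod_mono Ioo_subset_Icc_self Ioo_subset_Icc_self

theorem om_ae_eq_rect : Om L1 L2 =ᵐ[volume] Rect L1 L2 := by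
  rw [Measure.volume_eq_prod]
  exact Measure.set_prod_ae_eq Ioo_ae_eq_Icc Ioo_ae_eq_Icc

theorem ContDiffOn.hasFDerivAt_of_mem_om {f : ℝ × ℝ → ℝ} (hf : ContDiffOn ℝ 1 f (Rect L1 L2))
    {p : ℝ × ℝ} (hp : p ∈ Om L1 L2) : HasFDerivAt f (fderivWithin ℝ f (Rect L1 L2) p) p :=
  (hf.differentiableOn one_ne_zero p (om_subset_rect hp)).hasFDerivWithinAt.hasFDerivAt <|
    Filter.mem_of_superset (isOpen_om.mem_nhds hp) om_subset_rect

theorem ContDiffOn.continuousOn_fderivWithin_rect_apply (hL1 : 0 < L1) (hL2 : 0 < L2)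
    {f : ℝ × ℝ → ℝ} (hf : ContDiffOn ℝ 1 f (Rect L1 L2)) (v : ℝ × ℝ) :
    ContinuousOn (fun p => fderivWithin ℝ f (Rect L1 L2) p v) (Rect L1 L2) :=
  (hf.continuousOn_fderivWithin (uniqueDiffOn_rect hL1 hL2) le_rfl).clm_apply continuousOn_const

theorem ContinuousOn.intervalIntegrable_rect_fst {f : ℝ × ℝ → ℝ}
    (hf : ContinuousOn f (Rect L1 L2)) (hL1 : 0 ≤ L1) {y : ℝ} (hy : y ∈ Icc 0 L2) :
    IntervalIntegrable (fun x => f (x, y)) volume 0 L1 :=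
  (hf.comp (by fun_prop) fun _ hx => ⟨hx, hy⟩).intervalIntegrable_of_Icc hL1

theorem ContinuousOn.intervalIntegrable_rect_snd {f : ℝ × ℝ → ℝ}
    (hf : ContinuousOn f (Rect L1 L2)) (hL2 : 0 ≤ L2) {x : ℝ} (hx : x ∈ Icc 0 L1) :
    IntervalIntegrable (fun y => f (x, y)) volume 0 L2 :=
  (hf.comp (by fun_prop) fun _ hy => ⟨hx, hy⟩).intervalIntegrable_of_Icc hL2

theorem integral_om_pdx_add_pdy (hL1 : 0 < L1) (hL2 : 0 < L2) {f g : ℝ × ℝ → ℝ}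
    (hf : ContDiffOn ℝ 1 f (Rect L1 L2)) (hg : ContDiffOn ℝ 1 g (Rect L1 L2)) :
    ∫ p in Om L1 L2, (pdx L1 L2 f p + pdy L1 L2 g p) =
      (∫ x in (0 : ℝ)..L1, g (x, L2)) - (∫ x in (0 : ℝ)..L1, g (x, 0))
        + (∫ y in (0 : ℝ)..L2, f (L1, y)) - ∫ y in (0 : ℝ)..L2, f (0, y) := by
  have hRect : Rect L1 L2 = Icc ((0 : ℝ), (0 : ℝ)) (L1, L2) := by rw [Icc_prod_eq]; rfl
  have hcont : ContinuousOn (fun p => pdx L1 L2 f p + pdy L1 L2 g p) (Rect L1 L2) :=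
    (hf.continuousOn_fderivWithin_rect_apply hL1 hL2 _).add
      (hg.continuousOn_fderivWithin_rect_apply hL1 hL2 _)
  rw [setIntegral_congr_set om_ae_eq_rect, hRect]
  exact integral_divergence_prod_Icc_of_hasFDerivAt_of_le f g _ _ _ _
    (Prod.mk_le_mk.2 ⟨hL1.le, hL2.le⟩) (hRect ▸ hf.continuousOn) (hRect ▸ hg.continuousOn)
    (fun p hp => hf.hasFDerivAt_of_mem_om hp) (fun p hp => hg.hasFDerivAt_of_mem_om hp)
    (hRect ▸ hcont.integrableOn_compact (isCompact_Icc.prod isCompact_Icc))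

end Rectangle

theorem stmt8_general (L1 L2 α1 β1 α2 β2 : ℝ) (hL1 : 0 < L1) (hL2 : 0 < L2)
    (hα1 : 0 ≤ α1) (hα2 : 0 ≤ α2)
    (u1 u2 : ℝ × ℝ → ℝ)
    (hu1 : ContDiffOn ℝ 1 u1 (Rect L1 L2)) (hu2 : ContDiffOn ℝ 1 u2 (Rect L1 L2))
    (h1W : ∀ y ∈ Icc (0 : ℝ) L2, u1 (0, y) = 0)
    (h1S : ∀ x ∈ Icc (0 : ℝ) L1, u1 (x, 0) = 0)
    (h2E : ∀ y ∈ Icc (0 : ℝ) L2, u2 (L1, y) = 0)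
    (h2N : ∀ x ∈ Icc (0 : ℝ) L1, u2 (x, L2) = 0) :
    0 ≤ ∫ p in Om L1 L2,
        (u1 p * (α1 * pdx L1 L2 u1 p + β1 * pdx L1 L2 u2 p
            + α2 * pdy L1 L2 u1 p + β2 * pdy L1 L2 u2 p)
          + u2 p * (β1 * pdx L1 L2 u1 p - α1 * pdx L1 L2 u2 p
            + β2 * pdy L1 L2 u1 p - α2 * pdy L1 L2 u2 p)) := by
  set f := fun p => tracelessQuadForm α1 β1 (u1 p) (u2 p)
  set g := fun p => tracelessQuadForm α2 β2 (u1 p) (u2 p)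
  have hf : ContDiffOn ℝ 1 f (Rect L1 L2) := by unfold f tracelessQuadForm; fun_prop
  have hg : ContDiffOn ℝ 1 g (Rect L1 L2) := by unfold g tracelessQuadForm; fun_prop
  rw [setIntegral_congr_fun (g := fun p => (pdx L1 L2 f p + pdy L1 L2 g p) / 2)
      isOpen_om.measurableSet fun p hp => ?divergence_form,
    integral_div, integral_om_pdx_add_pdy hL1 hL2 hf hg]
  case divergence_form =>
    have hs := uniqueDiffOn_rect hL1 hL2 p (om_subset_rect hp)
    have hd1 := hu1.differentiableOn one_ne_zero p (om_subset_rect hp)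
    have hd2 := hu2.differentiableOn one_ne_zero p (om_subset_rect hp)
    simp only [pdx, pdy, f, g, fderivWithin_tracelessQuadForm_apply _ _ hs hd1 hd2]
    ring
  have hSN : ∫ x in (0 : ℝ)..L1, g (x, 0) ≤ ∫ x in (0 : ℝ)..L1, g (x, L2) :=
    intervalIntegral.integral_mono_on hL1.le
      (hg.continuousOn.intervalIntegrable_rect_fst hL1.le (left_mem_Icc.2 hL2.le))
      (hg.continuousOn.intervalIntegrable_rect_fst hL1.le (right_mem_Icc.2 hL2.le))
      fun x hx => by simpa only [g, h1S x hx, h2N x hx]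
        using tracelessQuadForm_zero_left_le_zero_right hα2 β2 _ _
  have hWE : ∫ y in (0 : ℝ)..L2, f (0, y) ≤ ∫ y in (0 : ℝ)..L2, f (L1, y) :=
    intervalIntegral.integral_mono_on hL2.le
      (hf.continuousOn.intervalIntegrable_rect_snd hL2.le (left_mem_Icc.2 hL1.le))
      (hf.continuousOn.intervalIntegrable_rect_snd hL2.le (right_mem_Icc.2 hL1.le))
      fun y hy => by simpa only [f, h1W y hy, h2E y hy]
        using tracelessQuadForm_zero_left_le_zero_right hα1 β1 _ _
  exact div_nonneg (by linarith) zero_le_two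

/-- Positivity of the constant-coefficient elliptic-mode operator
`𝒯₂ u = T1·∂x u + T2·∂y u` with `T1 = [[α1,β1],[β1,-α1]]`, `T2 = [[α2,β2],[β2,-α2]]`,
`α1, α2 ≥ 0`, `α2·β1 - α1·β2 > 0`, on pairs `(u1,u2)` with `u1 = 0` on `Γ_W ∪ Γ_S`
and `u2 = 0` on `Γ_E ∪ Γ_N`: `∫_Ω uᵗ·(T1·∂x u + T2·∂y u) ≥ 0`. -/
theorem stmt8 (L1 L2 α1 β1 α2 β2 : ℝ) (hL1 : 0 < L1) (hL2 : 0 < L2)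
    (hα1 : 0 ≤ α1) (hα2 : 0 ≤ α2) (hdet : 0 < α2 * β1 - α1 * β2)
    (u1 u2 : ℝ × ℝ → ℝ)
    (hu1 : ContDiffOn ℝ 1 u1 (Rect L1 L2)) (hu2 : ContDiffOn ℝ 1 u2 (Rect L1 L2))
    (h1W : ∀ y ∈ Icc (0 : ℝ) L2, u1 (0, y) = 0)
    (h1S : ∀ x ∈ Icc (0 : ℝ) L1, u1 (x, 0) = 0)
    (h2E : ∀ y ∈ Icc (0 : ℝ) L2, u2 (L1, y) = 0)
    (h2N : ∀ x ∈ Icc (0 : ℝ) L1, u2 (x, L2) = 0) :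
    0 ≤ ∫ p in Om L1 L2,
        (u1 p * (α1 * pdx L1 L2 u1 p + β1 * pdx L1 L2 u2 p
            + α2 * pdy L1 L2 u1 p + β2 * pdy L1 L2 u2 p)
          + u2 p * (β1 * pdx L1 L2 u1 p - α1 * pdx L1 L2 u2 p
            + β2 * pdy L1 L2 u1 p - α2 * pdy L1 L2 u2 p)) :=
  stmt8_general L1 L2 α1 β1 α2 β2 hL1 hL2 hα1 hα2 u1 u2 hu1 hu2 h1W h1S h2E h2N
end

section
/- Let L1, L2 > 0 and Ω = (0,L1)×(0,L2), with boundary sides Γ_W = {x=0}, Γ_E = {x=L1}, Γ_S = {y=0}, Γ_N = {y=L2}. For each j ∈ {W,E,S,N} let (a_j, b_j) ∈ ℝ² with (a_j, b_j) ≠ (0,0). Let u = (u1, u2) be a pair of functions continuously differentiable on the closed rectangle [0,L1]×[0,L2] such that a_j·u1 + b_j·u2 = 0 at every point of Γ_j, for each j ∈ {W,E,S,N}. Then ∫_Ω ∂x u2 · ∂y u1 dx dy = ∫_Ω ∂x u1 · ∂y u2 dx dy. -/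
/-!
With `u = (u1, u2)` the difference of the two integrals is `∫_Ω cross (∂x u) (∂y u)`. For the square
with lower-left corner `p` and side `t`, the cross product of its diagonals, `squareCross u t p`, is
`2 t² cross (∂x u) (∂y u) (p) + o(t²)`; by dominated convergence its integral over the shrunken
rectangle `(0, L1 - t) × (0, L2 - t)` is `2 t² ∫_Ω cross (∂x u) (∂y u) + o(t²)`.

On the other hand `squareCross` is the sum of the terms `cross (u a) (u b)` over the four oriented
edges `a → b` of the square, so in the integral the interior edges cancel and only strips of width
`t` along the four sides survive. The boundary condition puts the values of `u` on a side on one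
line through the origin, so the edge term vanishes on that side; within distance `t` of it the edge
term is `O(t²) + t · osc_t (Du) = o(t)` by the mean value inequality. The strips having width `t`,
the integral is `o(t²)`, and the Jacobian integral vanishes.
-/

open Set MeasureTheory

open Filter Topology

namespace Grisvard

def cross (p q : ℝ × ℝ) : ℝ := p.1 * q.2 - p.2 * q.1

lemma cross_eq_zero_of_linear {a b : ℝ} (hab : (a, b) ≠ (0, 0)) {p q : ℝ × ℝ}
    (hp : a * p.1 + b * p.2 = 0) (hq : a * q.1 + b * q.2 = 0) : cross p q = 0 := by
  have ha : a * cross p q = 0 := by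
    unfold cross
    linear_combination q.2 * hp - p.2 * hq
  have hb : b * cross p q = 0 := by
    unfold cross
    linear_combination p.1 * hq - q.1 * hp
  by_contra h
  exact hab (Prod.ext (by simpa [h] using ha) (by simpa [h] using hb))

lemma abs_cross_le (p q : ℝ × ℝ) : |cross p q| ≤ 2 * ‖p‖ * ‖q‖ := by
  have h1 : |p.1| ≤ ‖p‖ := norm_fst_le p
  have h2 : |p.2| ≤ ‖p‖ := norm_snd_le p
  have h3 : |q.1| ≤ ‖q‖ := norm_fst_le q
  have h4 : |q.2| ≤ ‖q‖ := norm_snd_le q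
  calc |cross p q| ≤ |p.1| * |q.2| + |p.2| * |q.1| := by
        rw [cross, ← abs_mul, ← abs_mul]; exact abs_sub _ _
    _ ≤ ‖p‖ * ‖q‖ + ‖p‖ * ‖q‖ := by gcongr
    _ = 2 * ‖p‖ * ‖q‖ := by ring

lemma continuous_cross : Continuous fun x : (ℝ × ℝ) × (ℝ × ℝ) => cross x.1 x.2 := by
  unfold cross; fun_prop

lemma intervalIntegral_sub_comp_add_right {f : ℝ → ℝ} (hf : Continuous f) (a b t : ℝ) :
    ∫ x in a..b, (f x - f (x + t)) = (∫ x in a..a + t, f x) - ∫ x in b..b + t, f x := by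
  have hft : Continuous fun x => f (x + t) := by fun_prop
  rw [intervalIntegral.integral_sub (hf.intervalIntegrable _ _) (hft.intervalIntegrable _ _),
    intervalIntegral.integral_comp_add_right f t,
    intervalIntegral.integral_interval_sub_interval_comm (hf.intervalIntegrable _ _)
      (hf.intervalIntegrable _ _) (hf.intervalIntegrable _ _)]

lemma integrableOn_Ioo_prod_Ioo {φ : ℝ × ℝ → ℝ} (hφ : Continuous φ) (a b c d : ℝ) :
    IntegrableOn φ (Ioo a b ×ˢ Ioo c d) :=
  (hφ.continuousOn.integrableOn_compact (isCompact_Icc.prod isCompact_Icc)).mono_set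
    (prod_mono Ioo_subset_Icc_self Ioo_subset_Icc_self)

lemma setIntegral_sub_comp_add_snd {φ : ℝ × ℝ → ℝ} (hφ : Continuous φ) (A : ℝ) {B : ℝ}
    (hB : 0 ≤ B) (t : ℝ) :
    ∫ p in Ioo 0 A ×ˢ Ioo 0 B, (φ p - φ (p + (0, t)))
      = ∫ x in Ioo 0 A, ((∫ y in 0..t, φ (x, y)) - ∫ y in B..B + t, φ (x, y)) := by
  rw [Measure.volume_eq_prod, setIntegral_prod _ (by
    rw [← Measure.volume_eq_prod]
    exact integrableOn_Ioo_prod_Ioo (hφ.sub (hφ.comp (continuous_add_const _))) _ _ _ _)]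
  refine setIntegral_congr_fun measurableSet_Ioo fun x _ => ?_
  rw [← integral_Ioc_eq_integral_Ioo, ← intervalIntegral.integral_of_le hB, ← zero_add t]
  simpa using intervalIntegral_sub_comp_add_right (hφ.comp (Continuous.prodMk_right x)) 0 B t

lemma setIntegral_comp_add_fst_sub {φ : ℝ × ℝ → ℝ} (hφ : Continuous φ) {A : ℝ} (hA : 0 ≤ A)
    (B t : ℝ) :
    ∫ p in Ioo 0 A ×ˢ Ioo 0 B, (φ (p + (t, 0)) - φ p)
      = ∫ y in Ioo 0 B, ((∫ x in A..A + t, φ (x, y)) - ∫ x in 0..t, φ (x, y)) := by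
  have h := setIntegral_sub_comp_add_snd (hφ.comp continuous_swap) B hA t
  rw [Measure.volume_eq_prod, ← setIntegral_prod_swap, ← Measure.volume_eq_prod]
  have hswap : ∀ z : ℝ × ℝ, φ (z.swap + (t, 0)) - φ z.swap
      = -((φ ∘ Prod.swap) z - (φ ∘ Prod.swap) (z + (0, t))) := fun z => by simp
  simp_rw [hswap, integral_neg, h, ← integral_neg, neg_sub]
  rfl

section Squares

variable {E : Type*} [NormedAddCommGroup E]

def edgeCross (u : E → ℝ × ℝ) (h p : E) : ℝ := cross (u p) (u (p + h))

def squareCross (u : ℝ × ℝ → ℝ × ℝ) (t : ℝ) (p : ℝ × ℝ) : ℝ :=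
  cross (u (p + (t, t)) - u p) (u (p + (0, t)) - u (p + (t, 0)))

lemma continuous_edgeCross {u : E → ℝ × ℝ} (hu : Continuous u) (h : E) :
    Continuous (edgeCross u h) :=
  continuous_cross.comp (hu.prodMk (hu.comp (continuous_add_const h)))

lemma continuous_squareCross {u : ℝ × ℝ → ℝ × ℝ} (hu : Continuous u) (t : ℝ) :
    Continuous (squareCross u t) := by
  have hshift : ∀ v : ℝ × ℝ, Continuous fun p => u (p + v) := fun v =>
    hu.comp (continuous_add_const v)
  exact continuous_cross.comp (((hshift _).sub hu).prodMk ((hshift _).sub (hshift _)))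

lemma squareCross_eq (u : ℝ × ℝ → ℝ × ℝ) (t : ℝ) (p : ℝ × ℝ) :
    squareCross u t p = (edgeCross u (t, 0) p - edgeCross u (t, 0) (p + (0, t)))
      + (edgeCross u (0, t) (p + (t, 0)) - edgeCross u (0, t) p) := by
  have h1 : p + (0, t) + (t, 0) = p + (t, t) := by ext <;> simp [add_comm]
  have h2 : p + (t, 0) + (0, t) = p + (t, t) := by ext <;> simp
  simp only [squareCross, edgeCross, h1, h2, cross, Prod.fst_sub, Prod.snd_sub]
  ring

lemma setIntegral_squareCross {u : ℝ × ℝ → ℝ × ℝ} (hu : Continuous u) {A B : ℝ} (hA : 0 ≤ A)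
    (hB : 0 ≤ B) (t : ℝ) :
    ∫ p in Ioo 0 A ×ˢ Ioo 0 B, squareCross u t p
      = (∫ x in Ioo 0 A, ((∫ y in 0..t, edgeCross u (t, 0) (x, y))
            - ∫ y in B..B + t, edgeCross u (t, 0) (x, y)))
        + ∫ y in Ioo 0 B, ((∫ x in A..A + t, edgeCross u (0, t) (x, y))
            - ∫ x in 0..t, edgeCross u (0, t) (x, y)) := by
  have hx := continuous_edgeCross hu ((t, 0) : ℝ × ℝ)
  have hy := continuous_edgeCross hu ((0, t) : ℝ × ℝ)
  have hx' : Continuous fun p => edgeCross u (t, 0) p - edgeCross u (t, 0) (p + (0, t)) :=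
    hx.sub (hx.comp (continuous_add_const _))
  have hy' : Continuous fun p => edgeCross u (0, t) (p + (t, 0)) - edgeCross u (0, t) p :=
    (hy.comp (continuous_add_const _)).sub hy
  simp_rw [squareCross_eq]
  rw [integral_add (integrableOn_Ioo_prod_Ioo hx' _ _ _ _) (integrableOn_Ioo_prod_Ioo hy' _ _ _ _),
    setIntegral_sub_comp_add_snd hx A hB, setIntegral_comp_add_fst_sub hy hA]

end Squares

section Estimates

variable {E : Type*} [NormedAddCommGroup E] [NormedSpace ℝ E] {R : Set E}

lemma norm_sub_sub_sub_le {F : Type*} [NormedAddCommGroup F] [NormedSpace ℝ F] {u : E → F}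
    {Du : E → E →L[ℝ] F} (hR : Convex ℝ R) (hu : ∀ z ∈ R, HasFDerivWithinAt u (Du z) R z)
    {p h k : E} {ω : ℝ} (hp : p ∈ R) (hph : p + h ∈ R) (hpk : p + k ∈ R) (hpkh : p + k + h ∈ R)
    (hω : ∀ z ∈ R, z + k ∈ R → ‖Du (z + k) - Du z‖ ≤ ω) :
    ‖(u (p + k + h) - u (p + k)) - (u (p + h) - u p)‖ ≤ ω * ‖h‖ := by
  set s := R ∩ (fun z => z + k) ⁻¹' R
  have hs : Convex ℝ s := hR.inter (hR.translate_preimage_left k)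
  have hder : ∀ z ∈ s, HasFDerivWithinAt (fun z => u (z + k) - u z) (Du (z + k) - Du z) s z := by
    intro z hz
    have hshift := (hu (z + k) hz.2).comp z ((hasFDerivAt_id z).add_const k).hasFDerivWithinAt
      (fun w (hw : w ∈ s) => hw.2)
    exact hshift.sub ((hu z hz.1).mono inter_subset_left)
  have hpkh' : p + h + k ∈ R := add_right_comm p k h ▸ hpkh
  rw [sub_sub_sub_comm, add_right_comm]
  simpa using hs.norm_image_sub_le_of_norm_hasFDerivWithin_le hder
    (fun z hz => hω z hz.1 hz.2) ⟨hp, hpk⟩ ⟨hph, hpkh'⟩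

lemma abs_edgeCross_le_of_eq_zero {u : E → ℝ × ℝ} {Du : E → E →L[ℝ] ℝ × ℝ} (hR : Convex ℝ R)
    (hu : ∀ z ∈ R, HasFDerivWithinAt u (Du z) R z) {K M t ω : ℝ}
    (hK : ∀ z ∈ R, ‖Du z‖ ≤ K) (hM : ∀ z ∈ R, ‖u z‖ ≤ M)
    (hω : ∀ z ∈ R, ∀ z' ∈ R, ‖z' - z‖ ≤ t → ‖Du z' - Du z‖ ≤ ω)
    {p q h : E} (hp : p ∈ R) (hph : p + h ∈ R) (hq : q ∈ R) (hqh : q + h ∈ R)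
    (hpq : ‖q - p‖ ≤ t) (ht : ‖h‖ ≤ t) (h0 : edgeCross u h p = 0) :
    |edgeCross u h q| ≤ 2 * t * (K ^ 2 * t + M * ω) := by
  obtain ⟨k, rfl⟩ : ∃ k, q = p + k := ⟨q - p, (add_sub_cancel p q).symm⟩
  rw [add_sub_cancel_left] at hpq
  have hLip : ∀ z ∈ R, ∀ z' ∈ R, ‖u z' - u z‖ ≤ K * ‖z' - z‖ := fun z hz z' hz' =>
    hR.norm_image_sub_le_of_norm_hasFDerivWithin_le hu hK hz hz'
  have hK0 : 0 ≤ K := (norm_nonneg _).trans (hK p hp)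
  have hω0 : 0 ≤ ω := by
    simpa using hω p hp p hp (by simpa using (norm_nonneg h).trans ht)
  have h1 : ‖u (p + k) - u p‖ ≤ K * t :=
    (hLip p hp _ hq).trans (by rw [add_sub_cancel_left]; gcongr)
  have h2 : ‖u (p + k + h) - u (p + k)‖ ≤ K * t :=
    (hLip _ hq _ hqh).trans (by rw [add_sub_cancel_left]; gcongr)
  have h3 : ‖(u (p + k + h) - u (p + k)) - (u (p + h) - u p)‖ ≤ ω * t :=
    (norm_sub_sub_sub_le hR hu hp hph hq hqh fun z hz hzk =>
      hω z hz _ hzk (by simpa using hpq)).trans (by gcongr)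
  have hsplit : edgeCross u h (p + k) - edgeCross u h p
      = cross (u (p + k) - u p) (u (p + k + h) - u (p + k))
        + cross (u p) ((u (p + k + h) - u (p + k)) - (u (p + h) - u p)) := by
    simp only [edgeCross, cross, Prod.fst_sub, Prod.snd_sub]; ring
  calc |edgeCross u h (p + k)| = |edgeCross u h (p + k) - edgeCross u h p| := by rw [h0, sub_zero]
    _ ≤ 2 * ‖u (p + k) - u p‖ * ‖u (p + k + h) - u (p + k)‖
        + 2 * ‖u p‖ * ‖(u (p + k + h) - u (p + k)) - (u (p + h) - u p)‖ := by
        rw [hsplit]; exact (abs_add_le _ _).trans (add_le_add (abs_cross_le _ _) (abs_cross_le _ _))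
    _ ≤ 2 * (K * t) * (K * t) + 2 * M * (ω * t) := by
        gcongr <;> linarith [hM p hp, norm_nonneg (u p), norm_nonneg (u (p + k) - u p)]
    _ = 2 * t * (K ^ 2 * t + M * ω) := by ring

end Estimates

lemma abs_setIntegral_sub_intervalIntegral_le {f : ℝ → ℝ → ℝ} {A t c : ℝ} (hA : 0 ≤ A)
    (ht : 0 ≤ t) {a b : ℝ} (ha : ∀ x ∈ Ioo 0 A, ∀ y ∈ Ioc a (a + t), |f x y| ≤ c)
    (hb : ∀ x ∈ Ioo 0 A, ∀ y ∈ Ioc b (b + t), |f x y| ≤ c) :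
    |∫ x in Ioo 0 A, ((∫ y in a..a + t, f x y) - ∫ y in b..b + t, f x y)| ≤ 2 * c * t * A := by
  have hstrip : ∀ x ∈ Ioo 0 A, ∀ a', (∀ y ∈ Ioc a' (a' + t), |f x y| ≤ c) →
      ‖∫ y in a'..a' + t, f x y‖ ≤ c * t := fun x hx a' h => by
    have hI := intervalIntegral.norm_integral_le_of_norm_le_const (f := f x) (a := a')
      (b := a' + t) (C := c) fun y hy => by
        rw [uIoc_of_le (le_add_of_nonneg_right ht)] at hy
        exact h y hy
    simpa [abs_of_nonneg ht] using hI
  have hbound : ∀ x ∈ Ioo 0 A,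
      ‖(∫ y in a..a + t, f x y) - ∫ y in b..b + t, f x y‖ ≤ 2 * c * t := fun x hx =>
    (norm_sub_le _ _).trans (by linarith [hstrip x hx a (ha x hx), hstrip x hx b (hb x hx)])
  simpa [Real.volume_real_Ioo_of_le hA] using
    norm_setIntegral_le_of_norm_le_const (μ := volume) measure_Ioo_lt_top hbound

lemma tendsto_squareCross_div_sq_of_hasFDerivAt {u : ℝ × ℝ → ℝ × ℝ} {L : ℝ × ℝ →L[ℝ] ℝ × ℝ}
    {p : ℝ × ℝ} (hu : HasFDerivAt u L p) :
    Tendsto (fun t => squareCross u t p / t ^ 2) (𝓝[>] 0)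
      (𝓝 (2 * cross (L (1, 0)) (L (0, 1)))) := by
  have hslope : ∀ v : ℝ × ℝ,
      Tendsto (fun t : ℝ => t⁻¹ • (u (p + t • v) - u p)) (𝓝[>] 0) (𝓝 (L v)) := by
    intro v
    have hline : HasDerivAt (fun s : ℝ => p + s • v) v 0 := by
      simpa using ((hasDerivAt_id (0 : ℝ)).smul_const v).const_add p
    have hu' : HasFDerivAt u L (p + (0 : ℝ) • v) := by simpa using hu
    simpa using (hu'.comp_hasDerivAt 0 hline).tendsto_slope_zero_right
  have hlim := (continuous_cross.tendsto _).comp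
    ((hslope (1, 1)).prodMk_nhds ((hslope (0, 1)).sub (hslope (1, 0))))
  have hval : cross (L (1, 1)) (L (0, 1) - L (1, 0)) = 2 * cross (L (1, 0)) (L (0, 1)) := by
    have h11 : L (1, 1) = L (1, 0) + L (0, 1) := by rw [← map_add]; simp
    simp only [h11, cross, Prod.fst_add, Prod.snd_add, Prod.fst_sub, Prod.snd_sub]; ring
  rw [← hval]
  refine hlim.congr' (eventually_nhdsWithin_of_forall fun t (ht : 0 < t) => ?_)
  simp only [Function.comp_apply, squareCross, cross, Prod.smul_mk, smul_eq_mul, mul_one,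
    mul_zero, Prod.fst_sub, Prod.snd_sub, Prod.smul_fst, Prod.smul_snd]
  field_simp
  ring

section Rectangle

variable {L1 L2 : ℝ}

structure CollinearOnSides (L1 L2 : ℝ) (u : ℝ × ℝ → ℝ × ℝ) : Prop where
  south : ∀ x ∈ Icc 0 L1, ∀ x' ∈ Icc 0 L1, cross (u (x, 0)) (u (x', 0)) = 0
  north : ∀ x ∈ Icc 0 L1, ∀ x' ∈ Icc 0 L1, cross (u (x, L2)) (u (x', L2)) = 0
  west : ∀ y ∈ Icc 0 L2, ∀ y' ∈ Icc 0 L2, cross (u (0, y)) (u (0, y')) = 0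
  east : ∀ y ∈ Icc 0 L2, ∀ y' ∈ Icc 0 L2, cross (u (L1, y)) (u (L1, y')) = 0

lemma CollinearOnSides.congr {u v : ℝ × ℝ → ℝ × ℝ} (hu : CollinearOnSides L1 L2 u)
    (hvu : EqOn v u (Rect L1 L2)) (hL1 : 0 ≤ L1) (hL2 : 0 ≤ L2) : CollinearOnSides L1 L2 v := by
  have hv : ∀ {x y : ℝ}, x ∈ Icc 0 L1 → y ∈ Icc 0 L2 → v (x, y) = u (x, y) :=
    fun hx hy => hvu ⟨hx, hy⟩
  have h01 : (0 : ℝ) ∈ Icc 0 L1 := ⟨le_rfl, hL1⟩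
  have h02 : (0 : ℝ) ∈ Icc 0 L2 := ⟨le_rfl, hL2⟩
  have hL1' : L1 ∈ Icc 0 L1 := ⟨hL1, le_rfl⟩
  have hL2' : L2 ∈ Icc 0 L2 := ⟨hL2, le_rfl⟩
  exact ⟨fun x hx x' hx' => by rw [hv hx h02, hv hx' h02]; exact hu.south x hx x' hx',
    fun x hx x' hx' => by rw [hv hx hL2', hv hx' hL2']; exact hu.north x hx x' hx',
    fun y hy y' hy' => by rw [hv h01 hy, hv h01 hy']; exact hu.west y hy y' hy',
    fun y hy y' hy' => by rw [hv hL1' hy, hv hL1' hy']; exact hu.east y hy y' hy'⟩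

lemma convex_Rect : Convex ℝ (Rect L1 L2) := (convex_Icc _ _).prod (convex_Icc _ _)

lemma isCompact_Rect : IsCompact (Rect L1 L2) := isCompact_Icc.prod isCompact_Icc

lemma uniqueDiffOn_Rect (hL1 : 0 < L1) (hL2 : 0 < L2) : UniqueDiffOn ℝ (Rect L1 L2) :=
  (uniqueDiffOn_Icc hL1).prod (uniqueDiffOn_Icc hL2)

lemma measurableSet_Om : MeasurableSet (Om L1 L2) := measurableSet_Ioo.prod measurableSet_Ioo

lemma Om_subset_Rect : Om L1 L2 ⊆ Rect L1 L2 :=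
  prod_mono Ioo_subset_Icc_self Ioo_subset_Icc_self

lemma Rect_mem_nhds {p : ℝ × ℝ} (hp : p ∈ Om L1 L2) : Rect L1 L2 ∈ 𝓝 p :=
  mem_of_superset ((isOpen_Ioo.prod isOpen_Ioo).mem_nhds hp) Om_subset_Rect

lemma add_mem_Rect {t a b : ℝ} {p : ℝ × ℝ} (hp : p ∈ Ioo 0 (L1 - t) ×ˢ Ioo 0 (L2 - t))
    (ha : a ∈ Icc 0 t) (hb : b ∈ Icc 0 t) : p + (a, b) ∈ Rect L1 L2 := by
  obtain ⟨⟨hx0, hx1⟩, hy0, hy1⟩ := hp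
  exact ⟨⟨by simp; linarith [ha.1], by simp; linarith [ha.2]⟩,
    ⟨by simp; linarith [hb.1], by simp; linarith [hb.2]⟩⟩

variable {K M t ω : ℝ} {u : ℝ × ℝ → ℝ × ℝ} {Du : ℝ × ℝ → ℝ × ℝ →L[ℝ] ℝ × ℝ}

lemma abs_squareCross_le (hu : ∀ z ∈ Rect L1 L2, HasFDerivWithinAt u (Du z) (Rect L1 L2) z)
    (hK : ∀ z ∈ Rect L1 L2, ‖Du z‖ ≤ K) (ht : 0 < t) {p : ℝ × ℝ}
    (hp : p ∈ Ioo 0 (L1 - t) ×ˢ Ioo 0 (L2 - t)) :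
    |squareCross u t p| ≤ 2 * K ^ 2 * t ^ 2 := by
  have hLip : ∀ z ∈ Rect L1 L2, ∀ z' ∈ Rect L1 L2, ‖u z' - u z‖ ≤ K * ‖z' - z‖ :=
    fun z hz z' hz' => convex_Rect.norm_image_sub_le_of_norm_hasFDerivWithin_le hu hK hz hz'
  have ht0 : t ∈ Icc 0 t := ⟨ht.le, le_rfl⟩
  have hz0 : (0 : ℝ) ∈ Icc 0 t := ⟨le_rfl, ht.le⟩
  have h0 : p ∈ Rect L1 L2 := by
    simpa only [Prod.mk_zero_zero, add_zero] using add_mem_Rect hp hz0 hz0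
  have hdiag : ‖u (p + (t, t)) - u p‖ ≤ K * t := by
    simpa [Prod.norm_def, abs_of_pos ht] using hLip _ h0 _ (add_mem_Rect hp ht0 ht0)
  have hanti : ‖u (p + (0, t)) - u (p + (t, 0))‖ ≤ K * t := by
    simpa [Prod.norm_def, abs_of_pos ht] using
      hLip _ (add_mem_Rect hp ht0 hz0) _ (add_mem_Rect hp hz0 ht0)
  have hprod := mul_le_mul hdiag hanti (norm_nonneg _) ((norm_nonneg _).trans hdiag)
  exact (abs_cross_le _ _).trans (by linarith)

lemma tendsto_setIntegral_squareCross_div_sq (hc : Continuous u)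
    (hu : ∀ z ∈ Rect L1 L2, HasFDerivWithinAt u (Du z) (Rect L1 L2) z)
    (hK : ∀ z ∈ Rect L1 L2, ‖Du z‖ ≤ K) :
    Tendsto (fun t => (∫ p in Ioo 0 (L1 - t) ×ˢ Ioo 0 (L2 - t), squareCross u t p) / t ^ 2)
      (𝓝[>] 0) (𝓝 (2 * ∫ p in Om L1 L2, cross (Du p (1, 0)) (Du p (0, 1)))) := by
  set S : ℝ → Set (ℝ × ℝ) := fun t => Ioo 0 (L1 - t) ×ˢ Ioo 0 (L2 - t)
  have hS : ∀ t, MeasurableSet (S t) := fun t => measurableSet_Ioo.prod measurableSet_Ioo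
  have heq : ∀ t > 0, (∫ p in S t, squareCross u t p) / t ^ 2
      = ∫ p in Om L1 L2, (S t).indicator (fun p => squareCross u t p / t ^ 2) p := by
    intro t ht
    have hSOm : S t ⊆ Om L1 L2 :=
      prod_mono (Ioo_subset_Ioo_right (by linarith)) (Ioo_subset_Ioo_right (by linarith))
    rw [setIntegral_indicator (hS t), inter_eq_right.mpr hSOm, integral_div]
  rw [← integral_const_mul]
  refine Tendsto.congr' (eventually_nhdsWithin_of_forall fun t ht => (heq t ht).symm) ?_
  refine tendsto_integral_filter_of_dominated_convergence (fun _ => 2 * K ^ 2)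
    (Eventually.of_forall fun t =>
      (((continuous_squareCross hc t).div_const _).aestronglyMeasurable).indicator (hS t))
    (eventually_nhdsWithin_of_forall fun t (ht : 0 < t) => Eventually.of_forall fun p => ?_)
    (integrableOn_const ((measure_mono Om_subset_Rect).trans_lt isCompact_Rect.measure_lt_top).ne)
    ((ae_restrict_iff' measurableSet_Om).mpr (Eventually.of_forall fun p hp => ?_))
  · by_cases hp : p ∈ S t
    · rw [indicator_of_mem hp, Real.norm_eq_abs, abs_div, abs_of_pos (pow_pos ht 2),
        div_le_iff₀ (pow_pos ht 2)]
      exact abs_squareCross_le hu hK ht hp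
    · rw [indicator_of_notMem hp, norm_zero]
      positivity
  · have hderiv := (hu p (Om_subset_Rect hp)).hasFDerivAt (Rect_mem_nhds hp)
    refine (tendsto_squareCross_div_sq_of_hasFDerivAt hderiv).congr' ?_
    obtain ⟨⟨hx0, hx⟩, hy0, hy⟩ := hp
    filter_upwards [Ioo_mem_nhdsGT (lt_min (sub_pos.mpr hx) (sub_pos.mpr hy))] with t ht
    have hx' := ht.2.trans_le (min_le_left _ _)
    have hy' := ht.2.trans_le (min_le_right _ _)
    have hpS : p ∈ S t := ⟨⟨hx0, by linarith⟩, hy0, by linarith⟩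
    rw [indicator_of_mem hpS]

section Strips

variable (hu : ∀ z ∈ Rect L1 L2, HasFDerivWithinAt u (Du z) (Rect L1 L2) z)
  (hK : ∀ z ∈ Rect L1 L2, ‖Du z‖ ≤ K) (hM : ∀ z ∈ Rect L1 L2, ‖u z‖ ≤ M)
  (hω : ∀ z ∈ Rect L1 L2, ∀ z' ∈ Rect L1 L2, ‖z' - z‖ ≤ t → ‖Du z' - Du z‖ ≤ ω)
include hu hK hM hω

lemma abs_edgeCross_horizontal_le (ht : 0 ≤ t) {y₀ : ℝ} (hy₀ : y₀ ∈ Icc 0 L2)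
    (hrow : ∀ x ∈ Icc 0 L1, ∀ x' ∈ Icc 0 L1, cross (u (x, y₀)) (u (x', y₀)) = 0)
    {x y : ℝ} (hx : x ∈ Icc 0 (L1 - t)) (hy : y ∈ Icc 0 L2) (hyy₀ : |y - y₀| ≤ t) :
    |edgeCross u (t, 0) (x, y)| ≤ 2 * t * (K ^ 2 * t + M * ω) := by
  have h0 : edgeCross u (t, 0) (x, y₀) = 0 := by
    simpa [edgeCross] using
      hrow x ⟨hx.1, by linarith [hx.2]⟩ (x + t) ⟨by linarith [hx.1], by linarith [hx.2]⟩
  refine abs_edgeCross_le_of_eq_zero convex_Rect hu hK hM hω ?_ ?_ ?_ ?_ ?_ ?_ h0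
  all_goals simp only [Rect, Prod.mk_add_mk, Prod.mk_sub_mk, mem_Icc, Prod.norm_def,
    Real.norm_eq_abs, max_le_iff, abs_le] at hx hy hy₀ hyy₀ ⊢
  all_goals and_intros <;> linarith

lemma abs_edgeCross_vertical_le (ht : 0 ≤ t) {x₀ : ℝ} (hx₀ : x₀ ∈ Icc 0 L1)
    (hcol : ∀ y ∈ Icc 0 L2, ∀ y' ∈ Icc 0 L2, cross (u (x₀, y)) (u (x₀, y')) = 0)
    {x y : ℝ} (hx : x ∈ Icc 0 L1) (hy : y ∈ Icc 0 (L2 - t)) (hxx₀ : |x - x₀| ≤ t) :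
    |edgeCross u (0, t) (x, y)| ≤ 2 * t * (K ^ 2 * t + M * ω) := by
  have h0 : edgeCross u (0, t) (x₀, y) = 0 := by
    simpa [edgeCross] using
      hcol y ⟨hy.1, by linarith [hy.2]⟩ (y + t) ⟨by linarith [hy.1], by linarith [hy.2]⟩
  refine abs_edgeCross_le_of_eq_zero convex_Rect hu hK hM hω ?_ ?_ ?_ ?_ ?_ ?_ h0
  all_goals simp only [Rect, Prod.mk_add_mk, Prod.mk_sub_mk, mem_Icc, Prod.norm_def,
    Real.norm_eq_abs, max_le_iff, abs_le] at hx hy hx₀ hxx₀ ⊢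
  all_goals and_intros <;> linarith

lemma abs_setIntegral_squareCross_le (hc : Continuous u) (hside : CollinearOnSides L1 L2 u)
    (ht : 0 < t) (ht1 : t ≤ L1) (ht2 : t ≤ L2) :
    |∫ p in Ioo 0 (L1 - t) ×ˢ Ioo 0 (L2 - t), squareCross u t p|
      ≤ 4 * t ^ 2 * (L1 + L2) * (K ^ 2 * t + M * ω) := by
  set c := 2 * t * (K ^ 2 * t + M * ω)
  have h00 : ((0 : ℝ), (0 : ℝ)) ∈ Rect L1 L2 := ⟨⟨le_rfl, by linarith⟩, le_rfl, by linarith⟩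
  have hM0 : 0 ≤ M := (norm_nonneg _).trans (hM _ h00)
  have hω0 : 0 ≤ ω := by simpa using hω _ h00 _ h00 (by simpa using ht.le)
  have hsouth : ∀ x ∈ Ioo 0 (L1 - t), ∀ y ∈ Ioc 0 (0 + t), |edgeCross u (t, 0) (x, y)| ≤ c :=
    fun x hx y hy => abs_edgeCross_horizontal_le hu hK hM hω ht.le ⟨le_rfl, by linarith⟩
      hside.south ⟨hx.1.le, hx.2.le⟩ ⟨hy.1.le, by linarith [hy.2]⟩
      (abs_le.mpr ⟨by linarith [hy.1], by linarith [hy.2]⟩)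
  have hnorth : ∀ x ∈ Ioo 0 (L1 - t), ∀ y ∈ Ioc (L2 - t) (L2 - t + t),
      |edgeCross u (t, 0) (x, y)| ≤ c :=
    fun x hx y hy => abs_edgeCross_horizontal_le hu hK hM hω ht.le ⟨by linarith, le_rfl⟩
      hside.north ⟨hx.1.le, hx.2.le⟩ ⟨by linarith [hy.1], by linarith [hy.2]⟩
      (abs_le.mpr ⟨by linarith [hy.1], by linarith [hy.2]⟩)
  have heast : ∀ y ∈ Ioo 0 (L2 - t), ∀ x ∈ Ioc (L1 - t) (L1 - t + t),
      |edgeCross u (0, t) (x, y)| ≤ c :=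
    fun y hy x hx => abs_edgeCross_vertical_le hu hK hM hω ht.le ⟨by linarith, le_rfl⟩
      hside.east ⟨by linarith [hx.1], by linarith [hx.2]⟩ ⟨hy.1.le, hy.2.le⟩
      (abs_le.mpr ⟨by linarith [hx.1], by linarith [hx.2]⟩)
  have hwest : ∀ y ∈ Ioo 0 (L2 - t), ∀ x ∈ Ioc 0 (0 + t), |edgeCross u (0, t) (x, y)| ≤ c :=
    fun y hy x hx => abs_edgeCross_vertical_le hu hK hM hω ht.le ⟨le_rfl, by linarith⟩
      hside.west ⟨hx.1.le, by linarith [hx.2]⟩ ⟨hy.1.le, hy.2.le⟩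
      (abs_le.mpr ⟨by linarith [hx.1], by linarith [hx.2]⟩)
  rw [setIntegral_squareCross hc (sub_nonneg.mpr ht1) (sub_nonneg.mpr ht2)]
  have hx := abs_setIntegral_sub_intervalIntegral_le (sub_nonneg.mpr ht1) ht.le hsouth hnorth
  have hy := abs_setIntegral_sub_intervalIntegral_le (sub_nonneg.mpr ht2) ht.le heast hwest
  rw [zero_add] at hx hy
  calc _ ≤ _ := abs_add_le _ _
    _ ≤ 2 * c * t * (L1 - t) + 2 * c * t * (L2 - t) := add_le_add hx hy
    _ ≤ 2 * c * t * L1 + 2 * c * t * L2 := by gcongr <;> linarith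
    _ = 4 * t ^ 2 * (L1 + L2) * (K ^ 2 * t + M * ω) := by ring

end Strips

lemma tendsto_setIntegral_squareCross_div_sq_zero (hL1 : 0 < L1) (hL2 : 0 < L2)
    (hc : Continuous u) (hu : ∀ z ∈ Rect L1 L2, HasFDerivWithinAt u (Du z) (Rect L1 L2) z)
    (hK : ∀ z ∈ Rect L1 L2, ‖Du z‖ ≤ K) (hM : ∀ z ∈ Rect L1 L2, ‖u z‖ ≤ M)
    (hDu : UniformContinuousOn Du (Rect L1 L2)) (hside : CollinearOnSides L1 L2 u) :
    Tendsto (fun t => (∫ p in Ioo 0 (L1 - t) ×ˢ Ioo 0 (L2 - t), squareCross u t p) / t ^ 2)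
      (𝓝[>] 0) (𝓝 0) := by
  rw [Metric.tendsto_nhds]
  intro ε hε
  have hM0 : 0 ≤ M := (norm_nonneg _).trans (hM (0, 0) ⟨⟨le_rfl, hL1.le⟩, le_rfl, hL2.le⟩)
  set η := ε / (8 * (L1 + L2))
  have hη : 0 < η := by positivity
  set ω := η / (2 * (M + 1))
  obtain ⟨δ, hδ, hUC⟩ := Metric.uniformContinuousOn_iff_le.mp hDu ω (by positivity)
  set r := min (min δ (η / (2 * (K ^ 2 + 1)))) (min L1 L2)
  filter_upwards [Ioo_mem_nhdsGT (show 0 < r by positivity)] with t ⟨ht, htr⟩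
  obtain ⟨⟨htδ, htη⟩, ht1, ht2⟩ := lt_min_iff.mp htr |>.imp lt_min_iff.mp lt_min_iff.mp
  have hω : ∀ z ∈ Rect L1 L2, ∀ z' ∈ Rect L1 L2, ‖z' - z‖ ≤ t → ‖Du z' - Du z‖ ≤ ω :=
    fun z hz z' hz' hzz' => by
      simpa [dist_eq_norm] using hUC z' hz' z hz (by rw [dist_eq_norm]; linarith [htδ])
  have hbound := abs_setIntegral_squareCross_le hu hK hM hω hc hside ht ht1.le ht2.le
  have hKt : K ^ 2 * t ≤ η / 2 := by
    rw [lt_div_iff₀ (by positivity)] at htη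
    nlinarith
  have hMω : M * ω ≤ η / 2 := by
    rw [mul_div_assoc', div_le_div_iff₀ (by positivity) two_pos]
    nlinarith
  rw [Real.dist_eq, sub_zero, abs_div, abs_of_pos (pow_pos ht 2), div_lt_iff₀ (pow_pos ht 2)]
  calc _ ≤ 4 * t ^ 2 * (L1 + L2) * (K ^ 2 * t + M * ω) := hbound
    _ ≤ 4 * t ^ 2 * (L1 + L2) * η := by gcongr; linarith
    _ < ε * t ^ 2 := by
        have : 4 * (L1 + L2) * η = ε / 2 := by simp only [η]; field_simp; ring
        nlinarith [pow_pos ht 2]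

theorem integral_cross_fderivWithin_eq_zero_of_continuous (hL1 : 0 < L1) (hL2 : 0 < L2)
    (hc : Continuous u) (hu : ContDiffOn ℝ 1 u (Rect L1 L2)) (hside : CollinearOnSides L1 L2 u) :
    ∫ p in Om L1 L2, cross (fderivWithin ℝ u (Rect L1 L2) p (1, 0))
      (fderivWithin ℝ u (Rect L1 L2) p (0, 1)) = 0 := by
  have hDu : ContinuousOn (fderivWithin ℝ u (Rect L1 L2)) (Rect L1 L2) :=
    hu.continuousOn_fderivWithin (uniqueDiffOn_Rect hL1 hL2) le_rfl
  have hder : ∀ z ∈ Rect L1 L2,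
      HasFDerivWithinAt u (fderivWithin ℝ u (Rect L1 L2) z) (Rect L1 L2) z :=
    fun z hz => (hu.differentiableOn one_ne_zero z hz).hasFDerivWithinAt
  obtain ⟨K, hK⟩ := isCompact_Rect.exists_bound_of_continuousOn hDu
  obtain ⟨M, hM⟩ := isCompact_Rect.exists_bound_of_continuousOn hc.continuousOn
  have h := tendsto_nhds_unique (tendsto_setIntegral_squareCross_div_sq hc hder hK)
    (tendsto_setIntegral_squareCross_div_sq_zero hL1 hL2 hc hder hK hM
      (isCompact_Rect.uniformContinuousOn_of_continuous hDu) hside)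
  linarith

theorem integral_cross_fderivWithin_eq_zero (hL1 : 0 < L1) (hL2 : 0 < L2)
    (hu : ContDiffOn ℝ 1 u (Rect L1 L2)) (hside : CollinearOnSides L1 L2 u) :
    ∫ p in Om L1 L2, cross (fderivWithin ℝ u (Rect L1 L2) p (1, 0))
      (fderivWithin ℝ u (Rect L1 L2) p (0, 1)) = 0 := by
  obtain ⟨v, hv⟩ := ContinuousMap.exists_restrict_eq isCompact_Rect.isClosed
    ⟨(Rect L1 L2).domRestrict u, hu.continuousOn.domRestrict⟩
  have hvu : EqOn v u (Rect L1 L2) := fun z hz => congrArg (· ⟨z, hz⟩) hv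
  refine Eq.trans (setIntegral_congr_fun measurableSet_Om fun p hp => ?_)
    (integral_cross_fderivWithin_eq_zero_of_continuous hL1 hL2 v.continuous (hu.congr hvu)
      (hside.congr hvu hL1.le hL2.le))
  rw [fderivWithin_congr' hvu (Om_subset_Rect hp)]

lemma cross_fderivWithin_prodMk {f g : ℝ × ℝ → ℝ} {p : ℝ × ℝ}
    (hf : DifferentiableWithinAt ℝ f (Rect L1 L2) p)
    (hg : DifferentiableWithinAt ℝ g (Rect L1 L2) p) (hp : UniqueDiffWithinAt ℝ (Rect L1 L2) p) :
    cross (fderivWithin ℝ (fun z => (f z, g z)) (Rect L1 L2) p (1, 0))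
        (fderivWithin ℝ (fun z => (f z, g z)) (Rect L1 L2) p (0, 1))
      = pdx L1 L2 f p * pdy L1 L2 g p - pdx L1 L2 g p * pdy L1 L2 f p := by
  rw [hf.fderivWithin_prodMk hg hp]
  rfl

lemma integrableOn_pdx_mul_pdy {f g : ℝ × ℝ → ℝ} (hL1 : 0 < L1) (hL2 : 0 < L2)
    (hf : ContDiffOn ℝ 1 f (Rect L1 L2)) (hg : ContDiffOn ℝ 1 g (Rect L1 L2)) :
    IntegrableOn (fun p => pdx L1 L2 f p * pdy L1 L2 g p) (Om L1 L2) := by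
  have hR := uniqueDiffOn_Rect hL1 hL2
  have hcont : ContinuousOn (fun p => pdx L1 L2 f p * pdy L1 L2 g p) (Rect L1 L2) :=
    ((hf.continuousOn_fderivWithin hR le_rfl).clm_apply continuousOn_const).mul
      ((hg.continuousOn_fderivWithin hR le_rfl).clm_apply continuousOn_const)
  exact (hcont.integrableOn_compact isCompact_Rect).mono_set Om_subset_Rect

end Rectangle

end Grisvard

/-- Grisvard's identity: if the pair `(u1, u2)` satisfies one linear homogeneous
boundary condition `a_j·u1 + b_j·u2 = 0` (with `(a_j, b_j) ≠ (0,0)`) on each of the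
four sides of the rectangle, then `∫_Ω ∂x u2·∂y u1 = ∫_Ω ∂x u1·∂y u2`. -/
theorem stmt11 (L1 L2 : ℝ) (hL1 : 0 < L1) (hL2 : 0 < L2)
    (aW bW aE bE aS bS aN bN : ℝ)
    (hW0 : (aW, bW) ≠ (0, 0)) (hE0 : (aE, bE) ≠ (0, 0))
    (hS0 : (aS, bS) ≠ (0, 0)) (hN0 : (aN, bN) ≠ (0, 0))
    (u1 u2 : ℝ × ℝ → ℝ)
    (hu1 : ContDiffOn ℝ 1 u1 (Rect L1 L2)) (hu2 : ContDiffOn ℝ 1 u2 (Rect L1 L2))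
    (hW : ∀ y ∈ Icc (0 : ℝ) L2, aW * u1 (0, y) + bW * u2 (0, y) = 0)
    (hE : ∀ y ∈ Icc (0 : ℝ) L2, aE * u1 (L1, y) + bE * u2 (L1, y) = 0)
    (hS : ∀ x ∈ Icc (0 : ℝ) L1, aS * u1 (x, 0) + bS * u2 (x, 0) = 0)
    (hN : ∀ x ∈ Icc (0 : ℝ) L1, aN * u1 (x, L2) + bN * u2 (x, L2) = 0) :
    ∫ p in Om L1 L2, pdx L1 L2 u2 p * pdy L1 L2 u1 p
      = ∫ p in Om L1 L2, pdx L1 L2 u1 p * pdy L1 L2 u2 p := by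
  open Grisvard in
  have hR := uniqueDiffOn_Rect hL1 hL2
  have hJ := integral_cross_fderivWithin_eq_zero hL1 hL2 (hu1.prodMk hu2)
    ⟨fun x hx x' hx' => cross_eq_zero_of_linear hS0 (hS x hx) (hS x' hx'),
      fun x hx x' hx' => cross_eq_zero_of_linear hN0 (hN x hx) (hN x' hx'),
      fun y hy y' hy' => cross_eq_zero_of_linear hW0 (hW y hy) (hW y' hy'),
      fun y hy y' hy' => cross_eq_zero_of_linear hE0 (hE y hy) (hE y' hy')⟩
  rw [setIntegral_congr_fun measurableSet_Om fun p hp =>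
      cross_fderivWithin_prodMk (hu1.differentiableOn one_ne_zero p (Om_subset_Rect hp))
        (hu2.differentiableOn one_ne_zero p (Om_subset_Rect hp)) (hR p (Om_subset_Rect hp)),
    integral_sub (integrableOn_pdx_mul_pdy hL1 hL2 hu1 hu2)
      (integrableOn_pdx_mul_pdy hL1 hL2 hu2 hu1)] at hJ
  exact (sub_eq_zero.mp hJ).symm
end

section
/- Let u0, v0, φ0, g be positive real numbers with u0² ≠ g·φ0, v0² ≠ g·φ0 and u0² + v0² ≠ g·φ0. Define the real 3×3 matrices 𝓔1 = [[u0, 0, g], [0, u0, 0], [φ0, 0, u0]] and 𝓔2 = [[v0, 0, 0], [0, v0, g], [0, φ0, v0]]. Then 𝓔1 is invertible, and if κ0 ∈ ℂ satisfies κ0² = g·(u0² + v0² − g·φ0)/φ0, then the characteristic polynomial of the complex matrix 𝓔1⁻¹·𝓔2 factors as det(λ·I − 𝓔1⁻¹·𝓔2) = (λ − λ1)·(λ − λ2)·(λ − λ3) with λ1 = (u0·v0 + φ0·κ0)/(u0² − g·φ0), λ2 = (u0·v0 − φ0·κ0)/(u0² − g·φ0), λ3 = v0/u0; moreover λ1,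 λ2, λ3 are pairwise distinct and 𝓔1⁻¹·𝓔2 is diagonalizable over ℂ. -/
/-!
The matrix `𝓔1⁻¹ 𝓔2` is diagonalised by explicit solutions of the pencil problem
`𝓔2 q = λ 𝓔1 q`: two gravity-wave modes `q(±κ0)` with `λ = (u0 v0 ± φ0 κ0)/(u0² - g φ0)` and the
advective mode `(u0, v0, 0)` with `λ = v0/u0`. Their determinant is
`-2 g φ0 (u0² - g φ0) κ0 (u0² + v0²) ≠ 0`, so they form an eigenbasis; this gives the
diagonalisation and, by similarity invariance, the characteristic polynomial. The two
gravity-wave eigenvalues differ because `κ0 ≠ 0`, and a gravity-wave eigenvalue equal to `v0/u0`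
would force `u0 κ0 = ∓ g v0`, which squared against the relation for `κ0²` gives
`(u0² - g φ0)(u0² + v0²) = 0`.
-/

open Matrix Polynomial

/-- The coefficient matrices of the linearized 2d inviscid shallow water equations. -/
def swE1 (u0 φ0 g : ℝ) : Matrix (Fin 3) (Fin 3) ℝ :=
  !![u0, 0, g; 0, u0, 0; φ0, 0, u0]

def swE2 (v0 φ0 g : ℝ) : Matrix (Fin 3) (Fin 3) ℝ :=
  !![v0, 0, 0; 0, v0, g; 0, φ0, v0]

namespace Matrix

variable {n R : Type*} [Fintype n] [DecidableEq n] [CommRing R]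

theorem mul_eq_mul_of_left_mul_eq {A B M Q D : Matrix n n R} (hA : IsUnit A.det)
    (hM : A * M = B) (hQ : B * Q = A * Q * D) : M * Q = Q * D := by
  calc M * Q = A⁻¹ * (B * Q) := by
        rw [← hM, ← Matrix.mul_assoc, ← Matrix.mul_assoc, nonsing_inv_mul _ hA, Matrix.one_mul]
    _ = Q * D := by
        rw [hQ, Matrix.mul_assoc, ← Matrix.mul_assoc, nonsing_inv_mul _ hA, Matrix.one_mul]

theorem inv_mul_mul_eq_of_mul_eq {M Q D : Matrix n n R} (hQ : IsUnit Q.det)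
    (h : M * Q = Q * D) : Q⁻¹ * M * Q = D := by
  rw [Matrix.mul_assoc, h, ← Matrix.mul_assoc, nonsing_inv_mul _ hQ, Matrix.one_mul]

theorem charpoly_eq_of_mul_eq {M Q D : Matrix n n R} (hQ : IsUnit Q.det)
    (h : M * Q = Q * D) : M.charpoly = D.charpoly := by
  rw [← inv_mul_mul_eq_of_mul_eq hQ h, Matrix.mul_assoc, charpoly_mul_comm, Matrix.mul_assoc,
    mul_nonsing_inv _ hQ, Matrix.mul_one]

theorem mul_transpose_eq_mul_diagonal_of_mulVec {A B : Matrix n n R} {v : n → n → R}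
    {d : n → R} (h : ∀ j, B *ᵥ v j = d j • A *ᵥ v j) :
    B * (of v)ᵀ = A * (of v)ᵀ * diagonal d := by
  ext i j
  rw [mul_diagonal]
  simpa [mul_apply, mulVec, dotProduct, mul_comm, Finset.sum_mul] using congrFun (h j) i

theorem map_mul_map_inv_mul {S : Type*} [CommRing S] (f : R →+* S) {A : Matrix n n R}
    (hA : IsUnit A.det) (B : Matrix n n R) : A.map f * (A⁻¹ * B).map f = B.map f := by
  rw [← Matrix.map_mul, ← Matrix.mul_assoc, mul_nonsing_inv _ hA, Matrix.one_mul]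

end Matrix

section

variable {R : Type*} [CommRing R]

def shallowWaterE1 (u φ g : R) : Matrix (Fin 3) (Fin 3) R :=
  !![u, 0, g; 0, u, 0; φ, 0, u]

def shallowWaterE2 (v φ g : R) : Matrix (Fin 3) (Fin 3) R :=
  !![v, 0, 0; 0, v, g; 0, φ, v]

theorem swE1_map (f : ℝ →+* R) (u φ g : ℝ) :
    (swE1 u φ g).map f = shallowWaterE1 (f u) (f φ) (f g) := by
  ext i j; fin_cases i <;> fin_cases j <;> simp [swE1, shallowWaterE1]

theorem swE2_map (f : ℝ →+* R) (v φ g : ℝ) :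
    (swE2 v φ g).map f = shallowWaterE2 (f v) (f φ) (f g) := by
  ext i j; fin_cases i <;> fin_cases j <;> simp [swE2, shallowWaterE2]

theorem det_shallowWaterE1 (u φ g : R) :
    (shallowWaterE1 u φ g).det = u * (u ^ 2 - g * φ) := by
  simp [shallowWaterE1, det_fin_three]; ring

end

section

variable {K : Type*} [Field K] {u v φ g κ : K}

def gravityWaveMode (u v φ g κ : K) : Fin 3 → K :=
  ![-g * (u * v + φ * κ), g * (u ^ 2 - g * φ), φ * (g * v + u * κ)]

theorem shallowWaterE2_mulVec_gravityWaveMode (hD : u ^ 2 - g * φ ≠ 0)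
    (hκ : κ ^ 2 * φ = g * (u ^ 2 + v ^ 2 - g * φ)) :
    shallowWaterE2 v φ g *ᵥ gravityWaveMode u v φ g κ =
      ((u * v + φ * κ) / (u ^ 2 - g * φ)) • shallowWaterE1 u φ g *ᵥ gravityWaveMode u v φ g κ := by
  have hE1 : shallowWaterE1 u φ g *ᵥ gravityWaveMode u v φ g κ =
      (u ^ 2 - g * φ) • ![-g * v, u * g, φ * κ] := by
    ext i
    fin_cases i <;>
      simp [shallowWaterE1, gravityWaveMode, mulVec, dotProduct, Fin.sum_univ_three] <;> ring
  have hE2 : shallowWaterE2 v φ g *ᵥ gravityWaveMode u v φ g κ =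
      (u * v + φ * κ) • ![-g * v, u * g, φ * κ] := by
    ext i
    fin_cases i <;> simp [shallowWaterE2, gravityWaveMode, mulVec, dotProduct, Fin.sum_univ_three]
    · ring
    · ring
    · linear_combination -φ * hκ
  rw [hE1, hE2, smul_smul, div_mul_cancel₀ _ hD]

theorem shallowWaterE2_mulVec_advectiveMode (hu : u ≠ 0) :
    shallowWaterE2 v φ g *ᵥ ![u, v, 0] = (v / u) • shallowWaterE1 u φ g *ᵥ ![u, v, 0] := by
  ext i
  fin_cases i <;>
    simp [shallowWaterE1, shallowWaterE2, mulVec, dotProduct, Fin.sum_univ_three] <;> field_simp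

theorem det_gravityWaveModes_advectiveMode :
    (of ![gravityWaveMode u v φ g κ, gravityWaveMode u v φ g (-κ), ![u, v, 0]]).det =
      -2 * g * φ * (u ^ 2 - g * φ) * κ * (u ^ 2 + v ^ 2) := by
  simp [gravityWaveMode, det_fin_three]
  ring

theorem gravityWave_eigenvalues_ne [NeZero (2 : K)] (hφ : φ ≠ 0) (hD : u ^ 2 - g * φ ≠ 0)
    (hκ : κ ≠ 0) :
    (u * v + φ * κ) / (u ^ 2 - g * φ) ≠ (u * v - φ * κ) / (u ^ 2 - g * φ) := by
  rw [Ne, div_left_inj' hD]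
  intro h
  exact mul_ne_zero (mul_ne_zero two_ne_zero hφ) hκ (by linear_combination h)

theorem gravityWave_eigenvalue_ne_advective (hu : u ≠ 0) (hg : g ≠ 0) (hφ : φ ≠ 0)
    (hD : u ^ 2 - g * φ ≠ 0) (hS : u ^ 2 + v ^ 2 ≠ 0)
    (hκ : κ ^ 2 * φ = g * (u ^ 2 + v ^ 2 - g * φ)) :
    (u * v + φ * κ) / (u ^ 2 - g * φ) ≠ v / u := by
  rw [Ne, div_eq_div_iff hD hu]
  intro h
  have hlin : u * κ + g * v = 0 := mul_left_cancel₀ hφ (by linear_combination h)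
  exact mul_ne_zero (mul_ne_zero hg hD) hS
    (by linear_combination φ * (u * κ - g * v) * hlin - u ^ 2 * hκ)

theorem exists_eigenbasis_of_shallowWaterE1_mul_eq [NeZero (2 : K)]
    {M : Matrix (Fin 3) (Fin 3) K}
    (hu : u ≠ 0) (hg : g ≠ 0) (hφ : φ ≠ 0) (hD : u ^ 2 - g * φ ≠ 0) (hS : u ^ 2 + v ^ 2 ≠ 0)
    (hκ : κ ^ 2 * φ = g * (u ^ 2 + v ^ 2 - g * φ)) (hκ0 : κ ≠ 0)
    (hM : shallowWaterE1 u φ g * M = shallowWaterE2 v φ g) :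
    ∃ Q : Matrix (Fin 3) (Fin 3) K, IsUnit Q.det ∧ M * Q = Q * diagonal
      ![(u * v + φ * κ) / (u ^ 2 - g * φ), (u * v - φ * κ) / (u ^ 2 - g * φ), v / u] := by
  refine ⟨(of ![gravityWaveMode u v φ g κ, gravityWaveMode u v φ g (-κ), ![u, v, 0]])ᵀ, ?_, ?_⟩
  · rw [det_transpose, det_gravityWaveModes_advectiveMode]
    exact isUnit_iff_ne_zero.mpr (by simp [two_ne_zero, hg, hφ, hD, hκ0, hS])
  have hE1 : IsUnit (shallowWaterE1 u φ g).det := by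
    rw [det_shallowWaterE1]
    exact isUnit_iff_ne_zero.mpr (mul_ne_zero hu hD)
  have hκneg : (-κ) ^ 2 * φ = g * (u ^ 2 + v ^ 2 - g * φ) := by rwa [neg_sq]
  refine mul_eq_mul_of_left_mul_eq hE1 hM (mul_transpose_eq_mul_diagonal_of_mulVec fun j ↦ ?_)
  fin_cases j
  · exact shallowWaterE2_mulVec_gravityWaveMode hD hκ
  · simpa [sub_eq_add_neg] using shallowWaterE2_mulVec_gravityWaveMode hD hκneg
  · exact shallowWaterE2_mulVec_advectiveMode hu

end

theorem stmt16_general (u0 v0 φ0 g : ℝ)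
    (hu0 : 0 < u0) (hφ0 : 0 < φ0) (hg : 0 < g)
    (h1 : u0 ^ 2 ≠ g * φ0) (h3 : u0 ^ 2 + v0 ^ 2 ≠ g * φ0)
    (κ0 : ℂ)
    (hκ0 : κ0 ^ 2 = (g : ℂ) * ((u0 : ℂ) ^ 2 + (v0 : ℂ) ^ 2 - (g : ℂ) * (φ0 : ℂ)) / (φ0 : ℂ)) :
    IsUnit (swE1 u0 φ0 g).det ∧
    (((swE1 u0 φ0 g)⁻¹ * swE2 v0 φ0 g).map (algebraMap ℝ ℂ)).charpoly =
      (X - C (((u0 : ℂ) * (v0 : ℂ) + (φ0 : ℂ) * κ0) / ((u0 : ℂ) ^ 2 - (g : ℂ) * (φ0 : ℂ)))) *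
      (X - C (((u0 : ℂ) * (v0 : ℂ) - (φ0 : ℂ) * κ0) / ((u0 : ℂ) ^ 2 - (g : ℂ) * (φ0 : ℂ)))) *
      (X - C ((v0 : ℂ) / (u0 : ℂ))) ∧
    (((u0 : ℂ) * (v0 : ℂ) + (φ0 : ℂ) * κ0) / ((u0 : ℂ) ^ 2 - (g : ℂ) * (φ0 : ℂ)) ≠
      ((u0 : ℂ) * (v0 : ℂ) - (φ0 : ℂ) * κ0) / ((u0 : ℂ) ^ 2 - (g : ℂ) * (φ0 : ℂ))) ∧
    (((u0 : ℂ) * (v0 : ℂ) + (φ0 : ℂ) * κ0) / ((u0 : ℂ) ^ 2 - (g : ℂ) * (φ0 : ℂ)) ≠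
      (v0 : ℂ) / (u0 : ℂ)) ∧
    (((u0 : ℂ) * (v0 : ℂ) - (φ0 : ℂ) * κ0) / ((u0 : ℂ) ^ 2 - (g : ℂ) * (φ0 : ℂ)) ≠
      (v0 : ℂ) / (u0 : ℂ)) ∧
    ∃ Q : Matrix (Fin 3) (Fin 3) ℂ, IsUnit Q.det ∧
      (Q⁻¹ * (((swE1 u0 φ0 g)⁻¹ * swE2 v0 φ0 g).map (algebraMap ℝ ℂ)) * Q).IsDiag := by
  have hu : (u0 : ℂ) ≠ 0 := by exact_mod_cast hu0.ne'
  have hφ : (φ0 : ℂ) ≠ 0 := by exact_mod_cast hφ0.ne'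
  have hg : (g : ℂ) ≠ 0 := by exact_mod_cast hg.ne'
  have hD : (u0 : ℂ) ^ 2 - g * φ0 ≠ 0 := by exact_mod_cast sub_ne_zero.mpr h1
  have hS : (u0 : ℂ) ^ 2 + v0 ^ 2 ≠ 0 := by exact_mod_cast (by positivity : u0 ^ 2 + v0 ^ 2 ≠ 0)
  have hκ : κ0 ^ 2 * φ0 = g * ((u0 : ℂ) ^ 2 + v0 ^ 2 - g * φ0) := by
    rw [hκ0, div_mul_cancel₀ _ hφ]
  have hκne : κ0 ≠ 0 := by
    rintro rfl
    refine mul_ne_zero hg ?_ (by simpa using hκ.symm)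
    exact_mod_cast sub_ne_zero.mpr h3
  have hE1 : IsUnit (swE1 u0 φ0 g).det := by
    rw [swE1, ← shallowWaterE1, det_shallowWaterE1]
    exact isUnit_iff_ne_zero.mpr (mul_ne_zero hu0.ne' (sub_ne_zero.mpr h1))
  have hM := map_mul_map_inv_mul (algebraMap ℝ ℂ) hE1 (swE2 v0 φ0 g)
  rw [swE1_map, swE2_map] at hM
  simp only [Complex.coe_algebraMap] at hM
  rw [Complex.coe_algebraMap]
  obtain ⟨Q, hQ, hMQ⟩ := exists_eigenbasis_of_shallowWaterE1_mul_eq hu hg hφ hD hS hκ hκne hM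
  refine ⟨hE1, ?_, gravityWave_eigenvalues_ne hφ hD hκne,
    gravityWave_eigenvalue_ne_advective hu hg hφ hD hS hκ, ?_, Q, hQ, ?_⟩
  · rw [charpoly_eq_of_mul_eq hQ hMQ, charpoly_diagonal, Fin.prod_univ_three]
    rfl
  · simpa [sub_eq_add_neg] using
      gravityWave_eigenvalue_ne_advective hu hg hφ hD hS (by rwa [neg_sq] : (-κ0) ^ 2 * φ0 = _)
  · rw [inv_mul_mul_eq_of_mul_eq hQ hMQ]
    exact isDiag_diagonal _

/-- In the generic case, `𝓔1` is invertible, the characteristic polynomial of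
`𝓔1⁻¹·𝓔2` (as a complex matrix) factors with the three roots
`λ1 = (u0·v0 + φ0·κ0)/(u0² - g·φ0)`, `λ2 = (u0·v0 - φ0·κ0)/(u0² - g·φ0)`,
`λ3 = v0/u0`, these roots are pairwise distinct, and `𝓔1⁻¹·𝓔2` is diagonalizable
over `ℂ`. -/
theorem stmt16 (u0 v0 φ0 g : ℝ)
    (hu0 : 0 < u0) (hv0 : 0 < v0) (hφ0 : 0 < φ0) (hg : 0 < g)
    (h1 : u0 ^ 2 ≠ g * φ0) (h2 : v0 ^ 2 ≠ g * φ0) (h3 : u0 ^ 2 + v0 ^ 2 ≠ g * φ0)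
    (κ0 : ℂ)
    (hκ0 : κ0 ^ 2 = (g : ℂ) * ((u0 : ℂ) ^ 2 + (v0 : ℂ) ^ 2 - (g : ℂ) * (φ0 : ℂ)) / (φ0 : ℂ)) :
    IsUnit (swE1 u0 φ0 g).det ∧
    (((swE1 u0 φ0 g)⁻¹ * swE2 v0 φ0 g).map (algebraMap ℝ ℂ)).charpoly =
      (X - C (((u0 : ℂ) * (v0 : ℂ) + (φ0 : ℂ) * κ0) / ((u0 : ℂ) ^ 2 - (g : ℂ) * (φ0 : ℂ)))) *
      (X - C (((u0 : ℂ) * (v0 : ℂ) - (φ0 : ℂ) * κ0) / ((u0 : ℂ) ^ 2 - (g : ℂ) * (φ0 : ℂ)))) *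
      (X - C ((v0 : ℂ) / (u0 : ℂ))) ∧
    (((u0 : ℂ) * (v0 : ℂ) + (φ0 : ℂ) * κ0) / ((u0 : ℂ) ^ 2 - (g : ℂ) * (φ0 : ℂ)) ≠
      ((u0 : ℂ) * (v0 : ℂ) - (φ0 : ℂ) * κ0) / ((u0 : ℂ) ^ 2 - (g : ℂ) * (φ0 : ℂ))) ∧
    (((u0 : ℂ) * (v0 : ℂ) + (φ0 : ℂ) * κ0) / ((u0 : ℂ) ^ 2 - (g : ℂ) * (φ0 : ℂ)) ≠
      (v0 : ℂ) / (u0 : ℂ)) ∧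
    (((u0 : ℂ) * (v0 : ℂ) - (φ0 : ℂ) * κ0) / ((u0 : ℂ) ^ 2 - (g : ℂ) * (φ0 : ℂ)) ≠
      (v0 : ℂ) / (u0 : ℂ)) ∧
    ∃ Q : Matrix (Fin 3) (Fin 3) ℂ, IsUnit Q.det ∧
      (Q⁻¹ * (((swE1 u0 φ0 g)⁻¹ * swE2 v0 φ0 g).map (algebraMap ℝ ℂ)) * Q).IsDiag :=
  stmt16_general u0 v0 φ0 g hu0 hφ0 hg h1 h3 κ0 hκ0
end

section
/- Let u0, v0, b10, b20, φ0, g be real numbers and define the real 5×5 matrices 𝓔1 = [[u0,0,−b10,0,g],[0,u0,0,−b10,0],[−b10,0,u0,0,0],[0,−b10,0,u0,0],[φ0,0,0,0,u0]] and 𝓔2 = [[v0,0,−b20,0,0],[0,v0,0,−b20,g],[−b20,0,v0,0,0],[0,−b20,0,v0,0],[0,φ0,0,0,v0]]. Assume 𝓔1 is invertible, b10 + u0 ≠ 0, b10 − u0 ≠ 0, and b10² − u0² + g·φ0 ≠ 0, and let δ ∈ ℂ satisfy δ² = (b10·b20 − u0·v0)² − (b10² − u0² + g·φ0)·(b20²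 − v0² + g·φ0). Then the characteristic polynomial of the complex matrix 𝓔1⁻¹·𝓔2 factors as det(λ·I − 𝓔1⁻¹·𝓔2) = (λ−λ1)(λ−λ2)(λ−λ3)(λ−λ4)(λ−λ5) where λ1 = (b20 + v0)/(b10 + u0), λ2 = (b20 − v0)/(b10 − u0), λ3 = ((b10·b20 − u0·v0) + δ)/(b10² − u0² + g·φ0), λ4 = ((b10·b20 − u0·v0) − δ)/(b10² − u0² + g·φ0), λ5 = v0/u0 (assuming also u0 ≠ 0). -/
/-!
Since `det 𝓔1 · det (λ - 𝓔1⁻¹ 𝓔2) = det (λ 𝓔1 - 𝓔2)`, it suffices to factor the determinant of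
the pencil. With `a = λ u0 - v0` and `b = b20 - λ b10`, the pencil is the block matrix
`[[a I, b I], [b I, a I]]` bordered by a fifth row and column that meet it only in the first two
positions, and its determinant is `a (a² - b²) (a² - b² - g φ0 (λ² + 1))`. The factor `a` gives
`λ5`, `a² - b²` gives `λ1` and `λ2`, and the last factor is `-(q λ² - 2 p λ + s)` with
`p = b10 b20 - u0 v0`, `q = b10² - u0² + g φ0`, `s = b20² - v0² + g φ0`, whose roots are `λ3`, `λ4`.
-/

open Matrix Polynomial

/-- The coefficient matrices of the linearized 2d shallow water MHD equations. -/
def swmhdE1 (u0 b10 φ0 g : ℝ) : Matrix (Fin 5) (Fin 5) ℝ :=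
  !![u0, 0, -b10, 0, g;
     0, u0, 0, -b10, 0;
     -b10, 0, u0, 0, 0;
     0, -b10, 0, u0, 0;
     φ0, 0, 0, 0, u0]

def swmhdE2 (v0 b20 φ0 g : ℝ) : Matrix (Fin 5) (Fin 5) ℝ :=
  !![v0, 0, -b20, 0, 0;
     0, v0, 0, -b20, g;
     -b20, 0, v0, 0, 0;
     0, -b20, 0, v0, 0;
     0, φ0, 0, 0, v0]

namespace Matrix

variable {n R S : Type*} [Fintype n] [DecidableEq n] [CommRing R] [CommRing S]

theorem map_nonsing_inv (f : R →+* S) {A : Matrix n n R} (hA : IsUnit A.det) :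
    A⁻¹.map f = (A.map f)⁻¹ := by
  refine (inv_eq_left_inv ?_).symm
  rw [← Matrix.map_mul, nonsing_inv_mul _ hA, Matrix.map_one f f.map_zero f.map_one]

theorem det_mul_eval_charpoly_nonsing_inv_mul {A B : Matrix n n R} (hA : IsUnit A.det) (t : R) :
    A.det * (A⁻¹ * B).charpoly.eval t = (t • A - B).det := by
  rw [eval_charpoly, ← det_mul, mul_sub, ← Matrix.mul_assoc, mul_nonsing_inv _ hA,
    Matrix.one_mul, scalar_apply, ← smul_eq_mul_diagonal]

theorem det_fin_five_bordered (a b c d e f : R) :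
    (!![a, 0, b, 0, c; 0, a, 0, b, d; b, 0, a, 0, 0; 0, b, 0, a, 0; e, f, 0, 0, a] :
      Matrix (Fin 5) (Fin 5) R).det = a * (a ^ 2 - b ^ 2) * (a ^ 2 - b ^ 2 - c * e - d * f) := by
  simp only [det_succ_row_zero, Fin.sum_univ_succ, Fin.succAbove, det_unique, Nat.reduceAdd,
    of_apply, cons_val, submatrix_apply, submatrix_submatrix, Function.comp_apply, Fin.reduceSucc,
    Fin.default_eq_zero, Fin.coe_ofNat_eq_mod, Nat.zero_mod, ↓reduceIte, Finset.univ_unique,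
    Fin.val_succ, Fin.val_eq_zero, zero_add, pow_one, neg_mul, Finset.sum_singleton,
    Fin.reduceCastSucc, even_two, Even.neg_pow, Fin.reduceLT, Fin.lt_one_iff, Fin.reduceEq]
  ring

end Matrix

theorem det_swmhdE1 (u0 b10 φ0 g : ℝ) :
    (swmhdE1 u0 b10 φ0 g).det = u0 * (u0 ^ 2 - b10 ^ 2) * (u0 ^ 2 - b10 ^ 2 - g * φ0) := by
  rw [swmhdE1, det_fin_five_bordered]
  ring

theorem det_smul_swmhdE1_sub_swmhdE2 (u0 v0 b10 b20 φ0 g : ℝ) (x : ℂ) :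
    (x • (swmhdE1 u0 b10 φ0 g).map (algebraMap ℝ ℂ) -
      (swmhdE2 v0 b20 φ0 g).map (algebraMap ℝ ℂ)).det =
      (x * u0 - v0) * ((x * u0 - v0) ^ 2 - (b20 - x * b10) ^ 2) *
        ((x * u0 - v0) ^ 2 - (b20 - x * b10) ^ 2 - g * φ0 * (x ^ 2 + 1)) := by
  have hpencil : x • (swmhdE1 u0 b10 φ0 g).map (algebraMap ℝ ℂ) -
      (swmhdE2 v0 b20 φ0 g).map (algebraMap ℝ ℂ) =
      !![x * u0 - v0, 0, b20 - x * b10, 0, x * g;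
         0, x * u0 - v0, 0, b20 - x * b10, -g;
         b20 - x * b10, 0, x * u0 - v0, 0, 0;
         0, b20 - x * b10, 0, x * u0 - v0, 0;
         x * φ0, -φ0, 0, 0, x * u0 - v0] := by
    ext i j
    fin_cases i <;> fin_cases j <;> simp [swmhdE1, swmhdE2] <;> ring
  rw [hpencil, det_fin_five_bordered]
  ring

theorem pencil_det_eq_mul_prod_sub_roots {K : Type*} [Field K] {u v b1 b2 G δ : K}
    (h1 : b1 + u ≠ 0) (h2 : b1 - u ≠ 0) (h3 : b1 ^ 2 - u ^ 2 + G ≠ 0) (hu : u ≠ 0)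
    (hδ : δ ^ 2 = (b1 * b2 - u * v) ^ 2 - (b1 ^ 2 - u ^ 2 + G) * (b2 ^ 2 - v ^ 2 + G)) (x : K) :
    (x * u - v) * ((x * u - v) ^ 2 - (b2 - x * b1) ^ 2) *
        ((x * u - v) ^ 2 - (b2 - x * b1) ^ 2 - G * (x ^ 2 + 1)) =
      u * (u ^ 2 - b1 ^ 2) * (u ^ 2 - b1 ^ 2 - G) *
        ((x - (b2 + v) / (b1 + u)) * (x - (b2 - v) / (b1 - u)) *
          (x - (b1 * b2 - u * v + δ) / (b1 ^ 2 - u ^ 2 + G)) *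
          (x - (b1 * b2 - u * v - δ) / (b1 ^ 2 - u ^ 2 + G)) * (x - v / u)) := by
  field_simp
  -- by `hδ`, the last two numerators multiply to `(x q - p)² - δ² = q (q x² - 2 p x + s)`
  linear_combination (x * u - v) * (u ^ 2 - b1 ^ 2) * (u ^ 2 - b1 ^ 2 - G) *
    (x * (b1 + u) - (b2 + v)) * (x * (b1 - u) - (b2 - v)) * hδ

/-- The characteristic polynomial of `𝓔1⁻¹·𝓔2` for the linearized SWMHD system factors
with the five roots `λ1 = (b20+v0)/(b10+u0)`, `λ2 = (b20-v0)/(b10-u0)`,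
`λ3,4 = ((b10·b20-u0·v0) ± δ)/(b10²-u0²+g·φ0)`, `λ5 = v0/u0`. -/
theorem stmt17 (u0 v0 b10 b20 φ0 g : ℝ)
    (hE1 : IsUnit (swmhdE1 u0 b10 φ0 g).det)
    (h1 : b10 + u0 ≠ 0) (h2 : b10 - u0 ≠ 0)
    (h3 : b10 ^ 2 - u0 ^ 2 + g * φ0 ≠ 0) (hu0 : u0 ≠ 0)
    (δ : ℂ)
    (hδ : δ ^ 2 = ((b10 : ℂ) * (b20 : ℂ) - (u0 : ℂ) * (v0 : ℂ)) ^ 2 -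
      ((b10 : ℂ) ^ 2 - (u0 : ℂ) ^ 2 + (g : ℂ) * (φ0 : ℂ)) *
        ((b20 : ℂ) ^ 2 - (v0 : ℂ) ^ 2 + (g : ℂ) * (φ0 : ℂ))) :
    (((swmhdE1 u0 b10 φ0 g)⁻¹ * swmhdE2 v0 b20 φ0 g).map (algebraMap ℝ ℂ)).charpoly =
      (X - C (((b20 : ℂ) + (v0 : ℂ)) / ((b10 : ℂ) + (u0 : ℂ)))) *
      (X - C (((b20 : ℂ) - (v0 : ℂ)) / ((b10 : ℂ) - (u0 : ℂ)))) *
      (X - C ((((b10 : ℂ) * (b20 : ℂ) - (u0 : ℂ) * (v0 : ℂ)) + δ) /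
        ((b10 : ℂ) ^ 2 - (u0 : ℂ) ^ 2 + (g : ℂ) * (φ0 : ℂ)))) *
      (X - C ((((b10 : ℂ) * (b20 : ℂ) - (u0 : ℂ) * (v0 : ℂ)) - δ) /
        ((b10 : ℂ) ^ 2 - (u0 : ℂ) ^ 2 + (g : ℂ) * (φ0 : ℂ)))) *
      (X - C ((v0 : ℂ) / (u0 : ℂ))) := by
  have h1' : (b10 : ℂ) + u0 ≠ 0 := by exact_mod_cast h1
  have h2' : (b10 : ℂ) - u0 ≠ 0 := by exact_mod_cast h2
  have h3' : (b10 : ℂ) ^ 2 - u0 ^ 2 + g * φ0 ≠ 0 := by exact_mod_cast h3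
  have hu0' : (u0 : ℂ) ≠ 0 := by exact_mod_cast hu0
  have hdetE1 : ((swmhdE1 u0 b10 φ0 g).map (algebraMap ℝ ℂ)).det =
      algebraMap ℝ ℂ (swmhdE1 u0 b10 φ0 g).det :=
    (RingHom.map_det _ _).symm
  have hE1' : IsUnit ((swmhdE1 u0 b10 φ0 g).map (algebraMap ℝ ℂ)).det :=
    hdetE1 ▸ hE1.map _
  rw [Matrix.map_mul, map_nonsing_inv _ hE1]
  refine Polynomial.funext fun x => mul_left_cancel₀ hE1'.ne_zero ?_
  rw [det_mul_eval_charpoly_nonsing_inv_mul hE1', det_smul_swmhdE1_sub_swmhdE2,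
    hdetE1, det_swmhdE1]
  simp only [eval_mul, eval_sub, eval_X, eval_C, Complex.coe_algebraMap]
  push_cast
  exact pencil_det_eq_mul_prod_sub_roots h1' h2' h3' hu0' hδ x
end
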